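/- arXiv:1507.07573 — 3 statements merged into one kernel-verified Lean document; each statement's English description precedes it below -/
import Mathlib

section
/- Every cycle C_n with n ≥ 3 satisfies χ''_Σ(C_n) ≤ Δ(C_n) + 3 = 5; i.e., C_n admits a proper total 5-coloring whose vertex values s_c(v) = c(v) + Σ_{uv∈E} c(uv) distinguish adjacent vertices. -/
/-!
Colour vertex `i` and edge `s(i, i + 1)` of `C_n` by `(5, 1)`, `(4, 2)` or `(1, 3)` according
to `i % 3`, so that the vertex sums run through `9, 7, 6` periodically. Where the cycle closes up
this still works when `n ≡ 0` or `n ≡ 2 (mod 3)` (vertex `0` then has sum `9` or `8`); when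
`n ≡ 1` the last vertex and edge are recoloured `2` and `4`, and the sums end in
`…, 7, 6, 9, 10, 7, …`. All conditions of an NSD total colouring of a cycle only compare
consecutive positions, so the verification is a case analysis on residues mod 3.
-/

open Finset SimpleGraph

variable {V : Type*}

/-- Sum of the colors of the edges incident with a vertex. -/
def edgeVal (G : SimpleGraph V) [Fintype V] [DecidableRel G.Adj]
    (ce : Sym2 V → ℕ) (v : V) : ℕ :=
  ∑ u ∈ G.neighborFinset v, ce s(v, u)

/-- The value of a vertex: its own color plus the sum of its incident edge colors. -/
def totalVal (G : SimpleGraph V) [Fintype V] [DecidableRel G.Adj]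
    (cv : V → ℕ) (ce : Sym2 V → ℕ) (v : V) : ℕ :=
  cv v + edgeVal G ce v

/-- `cv, ce` form a proper total `k`-coloring of `G` with colors in `{1,…,k}`:
adjacent vertices get distinct colors, incident edges get distinct colors, and each
vertex gets a color distinct from those of its incident edges. -/
def IsProperTotal (G : SimpleGraph V) (k : ℕ) (cv : V → ℕ) (ce : Sym2 V → ℕ) : Prop :=
  (∀ v, cv v ∈ Finset.Icc 1 k) ∧
  (∀ e ∈ G.edgeSet, ce e ∈ Finset.Icc 1 k) ∧
  (∀ ⦃u v⦄, G.Adj u v → cv u ≠ cv v) ∧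
  (∀ ⦃e f⦄, e ∈ G.edgeSet → f ∈ G.edgeSet → e ≠ f → (∃ v, v ∈ e ∧ v ∈ f) → ce e ≠ ce f) ∧
  (∀ ⦃u v⦄, G.Adj u v → ce s(u, v) ≠ cv u)

/-- The total chromatic number `χ''(G)`. -/
noncomputable def totalChrom (G : SimpleGraph V) : ℕ :=
  sInf {k | ∃ cv ce, IsProperTotal G k cv ce}

/-- The neighbor sum distinguishing total chromatic number `χ''_Σ(G)`. -/
noncomputable def nsdTotalChrom (G : SimpleGraph V) [Fintype V] [DecidableRel G.Adj] : ℕ :=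
  sInf {k | ∃ cv ce, IsProperTotal G k cv ce ∧
    ∀ ⦃u v⦄, G.Adj u v → totalVal G cv ce u ≠ totalVal G cv ce v}

namespace Fin

variable {m : ℕ}

theorem add_one_add_one_ne_self (u : Fin (m + 3)) : u + 1 + 1 ≠ u := by
  rw [add_assoc, Ne, add_eq_left, Fin.ext_iff, val_add, val_one, val_zero,
    Nat.mod_eq_of_lt (by omega)]
  omega

theorem add_one_ne_sub_one (u : Fin (m + 3)) : u + 1 ≠ u - 1 := by
  rw [Ne, eq_sub_iff_add_eq]
  exact add_one_add_one_ne_self u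

theorem val_add_one_eq_or (i : Fin (m + 3)) :
    i.val < m + 2 ∧ (i + 1).val = i.val + 1 ∨ i.val = m + 2 ∧ (i + 1).val = 0 := by
  rw [val_add_one]
  split_ifs with h
  · exact .inr ⟨by rw [h, val_last], rfl⟩
  · have : i.val ≠ m + 2 := fun h' => h (Fin.ext (by rw [h', val_last]))
    exact .inl ⟨by omega, rfl⟩

theorem val_sub_one_eq_or (i : Fin (m + 3)) :
    0 < i.val ∧ (i - 1).val + 1 = i.val ∨ i.val = 0 ∧ (i - 1).val = m + 2 := by
  rw [coe_sub_one]
  split_ifs with h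
  · exact .inr ⟨by rw [h, val_zero], rfl⟩
  · have : i.val ≠ 0 := fun h' => h (Fin.ext h')
    exact .inl ⟨by omega, by omega⟩

end Fin

namespace SimpleGraph

variable {m : ℕ}

theorem cycleGraph_adj_iff_eq_add_one {u v : Fin (m + 2)} :
    (cycleGraph (m + 2)).Adj u v ↔ v = u + 1 ∨ u = v + 1 := by
  rw [cycleGraph_adj, sub_eq_iff_eq_add', sub_eq_iff_eq_add', or_comm]

theorem exists_eq_mk_add_one_of_mem_edgeSet_cycleGraph {e : Sym2 (Fin (m + 2))}
    (he : e ∈ (cycleGraph (m + 2)).edgeSet) : ∃ i, e = s(i, i + 1) := by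
  induction e using Sym2.ind with
  | _ u v =>
    rcases cycleGraph_adj_iff_eq_add_one.1 ((mem_edgeSet _).1 he) with rfl | rfl
    exacts [⟨u, rfl⟩, ⟨v, Sym2.eq_swap⟩]

theorem eq_add_one_or_eq_add_one_of_mk_add_one_ne {i j w : Fin (m + 2)}
    (hne : s(i, i + 1) ≠ s(j, j + 1)) (hi : w ∈ s(i, i + 1)) (hj : w ∈ s(j, j + 1)) :
    j = i + 1 ∨ i = j + 1 := by
  rw [Sym2.mem_iff] at hi hj
  rcases hi with rfl | rfl <;> rcases hj with h | h
  · exact absurd (by rw [h]) hne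
  · exact .inr h
  · exact .inl h.symm
  · exact absurd (by rw [add_right_cancel h]) hne

def cycleEdgeColoring (b : Fin (m + 3) → ℕ) : Sym2 (Fin (m + 3)) → ℕ :=
  Sym2.lift ⟨fun u v => if v = u + 1 then b u else if u = v + 1 then b v else 0, fun u v => by
    dsimp only
    by_cases hv : v = u + 1
    · have hu : u ≠ v + 1 := fun hu => Fin.add_one_add_one_ne_self u (hv ▸ hu).symm
      rw [if_pos hv, if_neg hu, if_pos hv]
    · by_cases hu : u = v + 1
      · rw [if_neg hv, if_pos hu, if_pos hu]
      · rw [if_neg hv, if_neg hu, if_neg hu, if_neg hv]⟩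

theorem cycleEdgeColoring_mk_add_one (b : Fin (m + 3) → ℕ) (u : Fin (m + 3)) :
    cycleEdgeColoring b s(u, u + 1) = b u := by
  simp [cycleEdgeColoring]

theorem totalVal_cycleGraph (a b : Fin (m + 3) → ℕ) (v : Fin (m + 3)) :
    totalVal (cycleGraph (m + 3)) a (cycleEdgeColoring b) v = a v + (b (v - 1) + b v) := by
  have hprev : s(v, v - 1) = s(v - 1, v - 1 + 1) := by rw [sub_add_cancel, Sym2.eq_swap]
  rw [totalVal, edgeVal, cycleGraph_neighborFinset, sum_pair (Fin.add_one_ne_sub_one v).symm,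
    hprev, cycleEdgeColoring_mk_add_one, cycleEdgeColoring_mk_add_one]

theorem isProperTotal_cycleGraph {k : ℕ} {a b : Fin (m + 3) → ℕ}
    (ha : ∀ i, a i ∈ Icc 1 k) (hb : ∀ i, b i ∈ Icc 1 k) (haa : ∀ i, a i ≠ a (i + 1))
    (hbb : ∀ i, b i ≠ b (i + 1)) (hba : ∀ i, b i ≠ a i) (hba' : ∀ i, b i ≠ a (i + 1)) :
    IsProperTotal (cycleGraph (m + 3)) k a (cycleEdgeColoring b) := by
  refine ⟨ha, fun e he => ?_, fun u v huv => ?_, fun e f he hf hef ⟨w, hwe, hwf⟩ => ?_,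
    fun u v huv => ?_⟩
  · obtain ⟨i, rfl⟩ := exists_eq_mk_add_one_of_mem_edgeSet_cycleGraph he
    rw [cycleEdgeColoring_mk_add_one]
    exact hb i
  · rcases cycleGraph_adj_iff_eq_add_one.1 huv with rfl | rfl
    exacts [haa u, (haa v).symm]
  · obtain ⟨i, rfl⟩ := exists_eq_mk_add_one_of_mem_edgeSet_cycleGraph he
    obtain ⟨j, rfl⟩ := exists_eq_mk_add_one_of_mem_edgeSet_cycleGraph hf
    rw [cycleEdgeColoring_mk_add_one, cycleEdgeColoring_mk_add_one]
    rcases eq_add_one_or_eq_add_one_of_mk_add_one_ne hef hwe hwf with rfl | rfl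
    exacts [hbb i, (hbb j).symm]
  · rcases cycleGraph_adj_iff_eq_add_one.1 huv with rfl | rfl
    · rw [cycleEdgeColoring_mk_add_one]
      exact hba u
    · rw [Sym2.eq_swap, cycleEdgeColoring_mk_add_one]
      exact hba' v

theorem nsdTotalChrom_cycleGraph_le {k : ℕ} {a b : Fin (m + 3) → ℕ}
    (ha : ∀ i, a i ∈ Icc 1 k) (hb : ∀ i, b i ∈ Icc 1 k) (haa : ∀ i, a i ≠ a (i + 1))
    (hbb : ∀ i, b i ≠ b (i + 1)) (hba : ∀ i, b i ≠ a i) (hba' : ∀ i, b i ≠ a (i + 1))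
    -- the sums at `i` and `i + 1`, with their common edge colour `b i` cancelled
    (hsum : ∀ i, a i + b (i - 1) ≠ a (i + 1) + b (i + 1)) :
    nsdTotalChrom (cycleGraph (m + 3)) ≤ k := by
  have hval : ∀ i, totalVal (cycleGraph (m + 3)) a (cycleEdgeColoring b) i ≠
      totalVal (cycleGraph (m + 3)) a (cycleEdgeColoring b) (i + 1) := fun i => by
    rw [totalVal_cycleGraph, totalVal_cycleGraph, add_sub_cancel_right]
    have := hsum i
    omega
  refine Nat.sInf_le ⟨a, cycleEdgeColoring b,
    isProperTotal_cycleGraph ha hb haa hbb hba hba', fun u v huv => ?_⟩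
  rcases cycleGraph_adj_iff_eq_add_one.1 huv with rfl | rfl
  exacts [hval u, (hval v).symm]

end SimpleGraph

def cycleFiveVertexColor (m : ℕ) (i : Fin (m + 3)) : ℕ :=
  if i.val = m + 2 ∧ m % 3 = 1 then 2
  else if i.val % 3 = 0 then 5 else if i.val % 3 = 1 then 4 else 1

def cycleFiveEdgeColor (m : ℕ) (i : Fin (m + 3)) : ℕ :=
  if i.val = m + 2 ∧ m % 3 = 1 then 4 else i.val % 3 + 1

/-- Every cycle `Cₙ` with `n ≥ 3` satisfies `χ''_Σ(Cₙ) ≤ Δ(Cₙ) + 3 = 5`. -/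
theorem nsdTotalChrom_cycleGraph_le_five (n : ℕ) (hn : 3 ≤ n) :
    nsdTotalChrom (cycleGraph n) ≤ 5 := by
  obtain ⟨m, rfl⟩ : ∃ m, n = m + 3 := ⟨n - 3, by omega⟩
  refine nsdTotalChrom_cycleGraph_le (a := cycleFiveVertexColor m) (b := cycleFiveEdgeColor m)
    ?_ ?_ ?_ ?_ ?_ ?_ ?_ <;>
  · intro i
    have := Fin.val_add_one_eq_or i
    have := Fin.val_sub_one_eq_or i
    simp only [cycleFiveVertexColor, cycleFiveEdgeColor, mem_Icc]
    split_ifs <;> omega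
end

section
/- The complete graph K_n for n ≥ 2 satisfies χ''_Σ(K_n) ≤ n + 2 = Δ(K_n) + 3. -/
/-!
Colour the vertices and edges of `Kₙ` by the addition table of `ℤ/m` for an odd `m > n`:
the edge `uv` gets `u + v` and the vertex `v` gets `2v`. Since `m` is odd, `2v` is exactly
the entry of row `v` not used by its edges, and the table is a Latin square, so the colouring
is proper. Each full row of the table sums to the same constant, so the total value of `v`
is that constant (plus `n`) minus the entries `v + u` with `n ≤ u < m`. Taking `m = n + 1`
for even `n` and `m = n + 2` for odd `n`, these missing parts are pairwise distinct.
-/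

open Finset SimpleGraph

variable {V : Type*}

instance (n : ℕ) : DecidableRel (completeGraph (Fin n)).Adj :=
  fun a b => inferInstanceAs (Decidable (a ≠ b))

lemma Nat.mod_eq_ite_of_lt_two_mul {x m : ℕ} (h : x < 2 * m) :
    x % m = if x < m then x else x - m := by
  split_ifs with hxm
  · exact Nat.mod_eq_of_lt hxm
  · rw [Nat.mod_eq_sub_mod (not_lt.1 hxm), Nat.mod_eq_of_lt (by omega)]

lemma Finset.sum_range_add_mod (m w : ℕ) :
    ∑ u ∈ range m, (w + u) % m = ∑ u ∈ range m, u := by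
  induction w with
  | zero =>
    refine sum_congr rfl fun u hu => ?_
    rw [zero_add, Nat.mod_eq_of_lt (mem_range.1 hu)]
  | succ w ih =>
    have hshift := (sum_range_succ' (fun u => (w + u) % m) m).symm.trans
      (sum_range_succ (fun u => (w + u) % m) m)
    simp only [add_zero, Nat.add_mod_right, add_left_inj] at hshift
    rw [← ih, ← hshift]
    simp only [add_right_comm, add_assoc]

/-- The colour of the cell `(a, b)` of the addition table of `ℤ/m`, shifted into `{1, …, m}`. -/
def cyclicColor (m a b : ℕ) : ℕ := (a + b) % m + 1

lemma eq_of_cyclicColor_eq {m w x y : ℕ} (hx : x < m) (hy : y < m)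
    (h : cyclicColor m w x = cyclicColor m w y) : x = y :=
  Nat.ModEq.eq_of_lt_of_lt (Nat.ModEq.add_left_cancel' w (Nat.add_right_cancel h)) hx hy

lemma eq_of_cyclicColor_self_eq {m x y : ℕ} (hm : Odd m) (hx : x < m) (hy : y < m)
    (h : cyclicColor m x x = cyclicColor m y y) : x = y := by
  have h2 : 2 * x ≡ 2 * y [MOD m] := by
    rw [two_mul, two_mul]
    exact Nat.add_right_cancel h
  exact (Nat.ModEq.cancel_left_of_coprime hm.coprime_two_right h2).eq_of_lt_of_lt hx hy

variable {n : ℕ}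

def cyclicEdgeColor (m : ℕ) : Sym2 (Fin n) → ℕ :=
  Sym2.lift ⟨fun a b => cyclicColor m a b, fun a b => by simp only [cyclicColor, add_comm]⟩

def cyclicVertexColor (m : ℕ) (v : Fin n) : ℕ := cyclicColor m v v

theorem isProperTotal_cyclic (G : SimpleGraph (Fin n)) {m : ℕ} (hnm : n ≤ m) (hm : Odd m) :
    IsProperTotal G m (cyclicVertexColor m) (cyclicEdgeColor m) := by
  have hlt (v : Fin n) : (v : ℕ) < m := v.isLt.trans_le hnm
  have hcolor (a b : ℕ) : cyclicColor m a b ∈ Icc 1 m :=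
    mem_Icc.2 ⟨le_add_self, Nat.mod_lt _ hm.pos⟩
  refine ⟨fun v => hcolor v v, ?_, ?_, ?_, ?_⟩
  · rintro ⟨a, b⟩ -
    exact hcolor a b
  · intro a b hab h
    exact G.ne_of_adj hab (Fin.ext (eq_of_cyclicColor_self_eq hm (hlt a) (hlt b) h))
  · intro e f _ _ hef ⟨v, hve, hvf⟩
    obtain ⟨a, rfl⟩ := Sym2.mem_iff_exists.1 hve
    obtain ⟨b, rfl⟩ := Sym2.mem_iff_exists.1 hvf
    intro h
    exact hef (by rw [Fin.ext (eq_of_cyclicColor_eq (hlt a) (hlt b) h)])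
  · intro u v huv h
    exact G.ne_of_adj huv (Fin.ext (eq_of_cyclicColor_eq (hlt v) (hlt u) h)).symm

lemma totalVal_completeGraph_cyclic (m : ℕ) (v : Fin n) :
    totalVal (completeGraph (Fin n)) (cyclicVertexColor m) (cyclicEdgeColor m) v =
      ∑ u : Fin n, cyclicColor m v u := by
  have hnbhd : (completeGraph (Fin n)).neighborFinset v = univ.erase v := by
    ext u
    simp [ne_comm]
  rw [totalVal, edgeVal, hnbhd]
  exact add_sum_erase _ (fun u : Fin n => cyclicColor m v u) (mem_univ v)

def cyclicDeficit (n m v : ℕ) : ℕ := ∑ u ∈ Ico n m, (v + u) % m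

lemma totalVal_completeGraph_cyclic_add_cyclicDeficit {m : ℕ} (hnm : n ≤ m) (v : Fin n) :
    totalVal (completeGraph (Fin n)) (cyclicVertexColor m) (cyclicEdgeColor m) v +
      cyclicDeficit n m v = n + ∑ u ∈ range m, u := by
  rw [totalVal_completeGraph_cyclic, cyclicDeficit, ← sum_range_add_mod m v,
    ← sum_range_add_sum_Ico _ hnm,
    Fin.sum_univ_eq_sum_range (fun u => cyclicColor m v u)]
  simp only [cyclicColor, sum_add_distrib, sum_const, card_range, smul_eq_mul, mul_one]
  omega

theorem totalVal_completeGraph_cyclic_injective {m : ℕ} (hnm : n ≤ m)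
    (hdef : Function.Injective fun v : Fin n => cyclicDeficit n m v) :
    Function.Injective
      (totalVal (completeGraph (Fin n)) (cyclicVertexColor m) (cyclicEdgeColor m)) := by
  intro a b hab
  apply hdef
  have ha := totalVal_completeGraph_cyclic_add_cyclicDeficit hnm a
  have hb := totalVal_completeGraph_cyclic_add_cyclicDeficit hnm b
  dsimp only
  omega

lemma cyclicDeficit_succ_injective :
    Function.Injective fun v : Fin n => cyclicDeficit n (n + 1) v := by
  intro a b h
  simp only [cyclicDeficit, Nat.Ico_succ_singleton, sum_singleton] at h
  exact Fin.ext ((Nat.ModEq.add_right_cancel' n h).eq_of_lt_of_lt (by omega) (by omega))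

/-- For `2 ≤ v < n` the deficit is `2v - 3`, odd, while `v = 1` gives the even `n + 1` and
`v = 0` gives `2n + 1`. -/
lemma cyclicDeficit_add_two_injective (hn : Odd n) :
    Function.Injective fun v : Fin n => cyclicDeficit n (n + 2) v := by
  intro a b h
  have hpar := Nat.odd_iff.1 hn
  simp only [cyclicDeficit, sum_Ico_succ_top (Nat.le_succ n), Nat.Ico_succ_singleton,
    sum_singleton] at h
  rw [Nat.mod_eq_ite_of_lt_two_mul (by omega), Nat.mod_eq_ite_of_lt_two_mul (by omega),
    Nat.mod_eq_ite_of_lt_two_mul (by omega), Nat.mod_eq_ite_of_lt_two_mul (by omega)] at h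
  ext
  split_ifs at h <;> omega

theorem nsdTotalChrom_completeGraph_le_general (n : ℕ) :
    nsdTotalChrom (completeGraph (Fin n)) ≤ n + 2 := by
  obtain ⟨m, hnm, hmn, hm, hdef⟩ : ∃ m, n ≤ m ∧ m ≤ n + 2 ∧ Odd m ∧
      Function.Injective fun v : Fin n => cyclicDeficit n m v := by
    rcases Nat.even_or_odd n with hn | hn
    · exact ⟨n + 1, by omega, by omega, hn.add_one, cyclicDeficit_succ_injective⟩
    · exact ⟨n + 2, by omega, le_rfl, hn.add_even even_two, cyclicDeficit_add_two_injective hn⟩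
  calc nsdTotalChrom (completeGraph (Fin n)) ≤ m :=
        Nat.sInf_le ⟨cyclicVertexColor m, cyclicEdgeColor m, isProperTotal_cyclic _ hnm hm,
          fun _ _ huv => (totalVal_completeGraph_cyclic_injective hnm hdef).ne huv⟩
    _ ≤ n + 2 := hmn

/-- The complete graph `Kₙ` with `n ≥ 2` satisfies `χ''_Σ(Kₙ) ≤ n + 2 = Δ(Kₙ) + 3`. -/
theorem nsdTotalChrom_completeGraph_le (n : ℕ) (hn : 2 ≤ n) :
    nsdTotalChrom (completeGraph (Fin n)) ≤ n + 2 :=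
  nsdTotalChrom_completeGraph_le_general n
end

section
/- Symmetric Lovász Local Lemma: let A_1,…,A_n be events in a probability space such that each A_i is mutually independent of a set of all but at most D of the other events, and P(A_i) ≤ p for all i. If e·p·(D+1) ≤ 1, then P(⋂_{i=1}^n complement(A_i)) > 0. -/
/-!
Take `x = 1/(D+2)`. By strong induction on `|T|`, every `A i` with `i ∉ T` satisfies
`P(A i ∩ ⋂_{j∈T} A jᶜ) ≤ x · P(⋂_{j∈T} A jᶜ)`: split `T` into the at most `D` neighbours of `i`
and the rest; independence from the rest contributes the factor `P(A i) ≤ x (1-x)^D`, while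
removing the neighbours one at a time, each controlled by the induction hypothesis, loses at most
a factor `1 - x` per neighbour. The same peeling over all `n` events gives
`P(⋂ A iᶜ) ≥ (1-x)^n > 0`. Finally `e p (D+1) ≤ 1` yields `p ≤ x (1-x)^D` because
`(1 + 1/(D+1))^(D+1) ≤ e`.
-/

open MeasureTheory Finset

section

variable {Ω ι : Type*} [MeasurableSpace Ω] {μ : Measure Ω} [IsFiniteMeasure μ]

theorem one_sub_mul_measureReal_le_measureReal_sdiff {s t : Set Ω} (ht : MeasurableSet t)
    {x : ℝ} (h : μ.real (t ∩ s) ≤ x * μ.real s) : (1 - x) * μ.real s ≤ μ.real (s \ t) := by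
  have := measureReal_inter_add_sdiff (μ := μ) (s := s) ht
  rw [Set.inter_comm] at h
  linarith

variable [DecidableEq ι] {A : ι → Set Ω}

theorem one_sub_pow_mul_measureReal_biInter_compl_le (hA : ∀ i, MeasurableSet (A i)) {x : ℝ}
    (hx : x ≤ 1) {S U : Finset ι} (hSU : Disjoint S U)
    (h : ∀ j ∈ S, ∀ V ⊆ S ∪ U, j ∉ V →
      μ.real (A j ∩ ⋂ k ∈ V, (A k)ᶜ) ≤ x * μ.real (⋂ k ∈ V, (A k)ᶜ)) :
    (1 - x) ^ #S * μ.real (⋂ k ∈ U, (A k)ᶜ) ≤ μ.real (⋂ k ∈ S ∪ U, (A k)ᶜ) := by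
  induction S using Finset.induction_on with
  | empty => simp
  | @insert j S hjS ih =>
    rw [Finset.disjoint_insert_left] at hSU
    have hjSU : j ∉ S ∪ U := by simp [hjS, hSU.1]
    have hsub : S ∪ U ⊆ insert j S ∪ U := union_subset_union (subset_insert _ _) le_rfl
    have ih := ih hSU.2 fun k hk V hV => h k (mem_insert_of_mem hk) V (hV.trans hsub)
    calc (1 - x) ^ #(insert j S) * μ.real (⋂ k ∈ U, (A k)ᶜ)
        = (1 - x) * ((1 - x) ^ #S * μ.real (⋂ k ∈ U, (A k)ᶜ)) := by
          rw [card_insert_of_notMem hjS, pow_succ, mul_comm _ (1 - x), mul_assoc]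
      _ ≤ (1 - x) * μ.real (⋂ k ∈ S ∪ U, (A k)ᶜ) := by gcongr
      _ ≤ μ.real ((⋂ k ∈ S ∪ U, (A k)ᶜ) \ A j) :=
          one_sub_mul_measureReal_le_measureReal_sdiff (hA j)
            (h j (mem_insert_self _ _) _ hsub hjSU)
      _ = μ.real (⋂ k ∈ insert j S ∪ U, (A k)ᶜ) := by
          rw [insert_union, set_biInter_insert, Set.sdiff_eq, Set.inter_comm]

theorem measureReal_inter_biInter_compl_le {D : ℕ} (hA : ∀ i, MeasurableSet (A i))
    (Γ : ι → Finset ι) (hΓ : ∀ i, #(Γ i) ≤ D)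
    (hindep : ∀ i, ∀ T : Finset ι, (∀ j ∈ T, j ≠ i ∧ j ∉ Γ i) →
      μ (A i ∩ ⋂ j ∈ T, (A j)ᶜ) = μ (A i) * μ (⋂ j ∈ T, (A j)ᶜ))
    {x : ℝ} (hx0 : 0 ≤ x) (hx1 : x ≤ 1) (hp : ∀ i, μ.real (A i) ≤ x * (1 - x) ^ D)
    (T : Finset ι) {i : ι} (hi : i ∉ T) :
    μ.real (A i ∩ ⋂ j ∈ T, (A j)ᶜ) ≤ x * μ.real (⋂ j ∈ T, (A j)ᶜ) := by
  induction T using Finset.strongInduction generalizing i with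
  | H T ih =>
  set near := T ∩ Γ i
  set far := T \ Γ i
  have hT : near ∪ far = T := sup_inf_sdiff T (Γ i)
  have hpeel : (1 - x) ^ #near * μ.real (⋂ j ∈ far, (A j)ᶜ) ≤ μ.real (⋂ j ∈ T, (A j)ᶜ) := by
    refine hT ▸ one_sub_pow_mul_measureReal_biInter_compl_le hA hx1 disjoint_inf_sdiff
      fun j hj V hV hjV => ih V ?_ hjV
    rw [hT] at hV
    exact (ssubset_iff_of_subset hV).2 ⟨j, (mem_inter.1 hj).1, hjV⟩
  have hfar : μ.real (A i ∩ ⋂ j ∈ far, (A j)ᶜ) = μ.real (A i) * μ.real (⋂ j ∈ far, (A j)ᶜ) := by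
    simp only [measureReal_def, ← ENNReal.toReal_mul]
    rw [hindep i far fun j hj => ⟨fun h => hi (h ▸ (mem_sdiff.1 hj).1), (mem_sdiff.1 hj).2⟩]
  calc μ.real (A i ∩ ⋂ j ∈ T, (A j)ᶜ) ≤ μ.real (A i ∩ ⋂ j ∈ far, (A j)ᶜ) :=
        measureReal_mono (Set.inter_subset_inter_right _
          (Set.biInter_subset_biInter_left fun _ hj => (mem_sdiff.1 hj).1))
    _ = μ.real (A i) * μ.real (⋂ j ∈ far, (A j)ᶜ) := hfar
    _ ≤ x * (1 - x) ^ #near * μ.real (⋂ j ∈ far, (A j)ᶜ) := by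
        gcongr
        refine (hp i).trans (mul_le_mul_of_nonneg_left (pow_le_pow_of_le_one ?_ ?_ ?_) hx0)
        · linarith
        · linarith
        · exact (card_le_card inter_subset_right).trans (hΓ i)
    _ ≤ x * μ.real (⋂ j ∈ T, (A j)ᶜ) := by rw [mul_assoc]; gcongr

theorem measure_iInter_compl_pos [Fintype ι] [IsProbabilityMeasure μ] {D : ℕ}
    (hA : ∀ i, MeasurableSet (A i)) (Γ : ι → Finset ι) (hΓ : ∀ i, #(Γ i) ≤ D)
    (hindep : ∀ i, ∀ T : Finset ι, (∀ j ∈ T, j ≠ i ∧ j ∉ Γ i) →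
      μ (A i ∩ ⋂ j ∈ T, (A j)ᶜ) = μ (A i) * μ (⋂ j ∈ T, (A j)ᶜ))
    {x : ℝ} (hx0 : 0 ≤ x) (hx1 : x < 1) (hp : ∀ i, μ.real (A i) ≤ x * (1 - x) ^ D) :
    0 < μ (⋂ i, (A i)ᶜ) := by
  have hpeel := one_sub_pow_mul_measureReal_biInter_compl_le (μ := μ) hA hx1.le
    (disjoint_empty_right univ) fun j _ V _ hjV =>
      measureReal_inter_biInter_compl_le hA Γ hΓ hindep hx0 hx1.le hp V hjV
  simp only [union_empty, mem_univ, Set.iInter_true, notMem_empty, Set.iInter_false,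
    Set.iInter_univ, probReal_univ, mul_one] at hpeel
  have hpos : 0 < μ.real (⋂ i, (A i)ᶜ) := (pow_pos (by linarith) _).trans_le hpeel
  exact (ENNReal.toReal_pos_iff.1 hpos).1

end

theorem le_inv_add_two_mul_one_sub_pow_of_exp_mul_le_one {p : ℝ} {D : ℕ}
    (h : Real.exp 1 * p * (D + 1) ≤ 1) :
    p ≤ ((D : ℝ) + 2)⁻¹ * (1 - ((D : ℝ) + 2)⁻¹) ^ D := by
  have hexp : (1 + ((D : ℝ) + 1)⁻¹) ^ (D + 1) ≤ Real.exp 1 := by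
    simpa using Real.one_add_inv_pow_le_exp (n := D + 1)
  have heq : ((D : ℝ) + 2)⁻¹ * (1 - ((D : ℝ) + 2)⁻¹) ^ D
      = (((D : ℝ) + 1) * (1 + ((D : ℝ) + 1)⁻¹) ^ (D + 1))⁻¹ := by
    have h1 : 1 - ((D : ℝ) + 2)⁻¹ = (D + 1) / (D + 2) := by field_simp; ring
    have h2 : 1 + ((D : ℝ) + 1)⁻¹ = (D + 2) / (D + 1) := by field_simp; ring
    rw [h1, h2, div_pow, div_pow, pow_succ, pow_succ]
    field_simp
  calc p ≤ (Real.exp 1 * (D + 1))⁻¹ := by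
        rw [← one_div, le_div_iff₀ (by positivity)]
        linarith
    _ ≤ _ := by rw [heq, mul_comm]; gcongr

/-- Symmetric Lovász Local Lemma: if each event `A i` has probability at most `p`, is
mutually independent of all the events other than itself and those indexed by `Γ i`,
where `|Γ i| ≤ D`, and `e·p·(D+1) ≤ 1`, then with positive probability no event occurs. -/
theorem lovasz_local_lemma {Ω : Type*} [MeasurableSpace Ω] (μ : Measure Ω)
    [IsProbabilityMeasure μ] (n : ℕ) (A : Fin n → Set Ω)
    (hA : ∀ i, MeasurableSet (A i)) (D : ℕ) (p : ℝ)
    (Γ : Fin n → Finset (Fin n)) (hΓ : ∀ i, (Γ i).card ≤ D)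
    (hindep : ∀ i, ∀ T : Finset (Fin n), (∀ j ∈ T, j ≠ i ∧ j ∉ Γ i) →
      μ (A i ∩ ⋂ j ∈ T, (A j)ᶜ) = μ (A i) * μ (⋂ j ∈ T, (A j)ᶜ))
    (hp : ∀ i, μ (A i) ≤ ENNReal.ofReal p)
    (hcond : Real.exp 1 * p * (D + 1) ≤ 1) :
    0 < μ (⋂ i, (A i)ᶜ) := by
  set x : ℝ := ((D : ℝ) + 2)⁻¹
  have hx0 : 0 ≤ x := by positivity
  have hx1 : x < 1 := inv_lt_one_of_one_lt₀ (by linarith [D.cast_nonneg (α := ℝ)])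
  have hxD : 0 ≤ x * (1 - x) ^ D := mul_nonneg hx0 (pow_nonneg (by linarith) D)
  refine measure_iInter_compl_pos hA Γ hΓ hindep hx0 hx1 fun i => ?_
  exact ENNReal.toReal_le_of_le_ofReal hxD ((hp i).trans
    (ENNReal.ofReal_le_ofReal (le_inv_add_two_mul_one_sub_pow_of_exp_mul_le_one hcond)))
end
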